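/- arXiv:2505.14641 — 4 statements merged into one kernel-verified Lean document; each statement's English description precedes it below -/
import Mathlib

section
/- For every natural number q ≥ 3 there exists a subset U of the vertices of the Hamming graph H(2,q) with |U| = 3q such that the VC-dimension of (U, n(U)) is strictly less than 3. -/
/-- Two vertices of the Hamming graph `H(d,q,t)` (vertex set `(ZMod q)^d`) are adjacent
if and only if they differ in exactly `t` coordinates. -/
def hammingAdj {d q : ℕ} (t : ℕ) (x y : Fin d → ZMod q) : Prop :=
  (Finset.univ.filter fun i => x i ≠ y i).card = t

/-- `W ⊆ U` is shattered by the neighborhoods `n(U)`: for every `S ⊆ W` there is a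
vertex `u ∈ U` with `n(u) ∩ W = S`. -/
def Shatters {d q : ℕ} (t : ℕ) (U W : Finset (Fin d → ZMod q)) : Prop :=
  ∀ S ⊆ W, ∃ u ∈ U, ∀ w ∈ W, (w ∈ S ↔ hammingAdj t u w)

/-!
Take `U` to be the union of three consecutive diagonals `{z | z 1 - z 0 ∈ {0, 1, 2}}`, so that
every row and every column meets `U` in at most three points. Suppose `W ⊆ U` with `|W| ≥ 3` is
shattered. A vertex `u ∈ U` adjacent to all of `W` shares a coordinate with each point of `W`, so
by pigeonhole two points `x ≠ y` of `W` lie on a common line. All common neighbours of `x` and `y`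
lie on that line, and only one point of `U` on it is left besides `x` and `y`. Hence `u` and the
vertex realising `S = {x, y}` coincide, although only the former is adjacent to a third point of `W`.
-/

open Finset

section HammingPlane

variable {q : ℕ}

lemma hammingAdj_one_iff {u w : Fin 2 → ZMod q} :
    hammingAdj 1 u w ↔ u ≠ w ∧ ∃ i, u i = w i := by
  rw [hammingAdj, card_filter, Fin.sum_univ_two]
  simp only [ne_eq, funext_iff, Fin.forall_fin_two, Fin.exists_fin_two]
  split_ifs <;> simp_all

lemma apply_eq_of_hammingAdj_of_hammingAdj {x y z : Fin 2 → ZMod q} (hxy : x ≠ y) {i : Fin 2}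
    (hi : x i = y i) (hx : hammingAdj 1 z x) (hy : hammingAdj 1 z y) : z i = x i := by
  rw [hammingAdj_one_iff] at hx hy
  rw [Ne, funext_iff, Fin.forall_fin_two] at hxy
  rw [Fin.exists_fin_two] at hx hy
  fin_cases i <;> grind

lemma exists_ne_apply_eq_of_forall_hammingAdj {u : Fin 2 → ZMod q}
    {W : Finset (Fin 2 → ZMod q)} (hW : 2 < #W) (h : ∀ w ∈ W, hammingAdj 1 u w) :
    ∃ x ∈ W, ∃ y ∈ W, x ≠ y ∧ ∃ i, x i = y i := by
  have : ∀ w, ∃ i, w ∈ W → u i = w i := fun w => by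
    by_cases hw : w ∈ W
    · obtain ⟨-, i, hi⟩ := hammingAdj_one_iff.mp (h w hw)
      exact ⟨i, fun _ => hi⟩
    · exact ⟨0, fun hw' => absurd hw' hw⟩
  choose f hf using this
  obtain ⟨x, hx, y, hy, hxy, hfxy⟩ :=
    exists_ne_map_eq_of_card_lt_of_maps_to (t := univ) (by simpa using hW)
      (fun w _ => mem_univ (f w))
  exact ⟨x, hx, y, hy, hxy, f x, by rw [← hf x hx, hfxy, hf y hy]⟩

lemma eq_of_hammingAdj_of_card_filter_le_three {U : Finset (Fin 2 → ZMod q)}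
    (hU : ∀ i t, #(U.filter (· i = t)) ≤ 3) {x y : Fin 2 → ZMod q} (hx : x ∈ U) (hy : y ∈ U)
    (hxy : x ≠ y) {i : Fin 2} (hi : x i = y i) {u v : Fin 2 → ZMod q} (hu : u ∈ U) (hv : v ∈ U)
    (hux : hammingAdj 1 u x) (huy : hammingAdj 1 u y) (hvx : hammingAdj 1 v x)
    (hvy : hammingAdj 1 v y) : u = v := by
  set L := U.filter (· i = x i)
  have hL : #L ≤ 3 := hU i (x i)
  have hmem : ∀ z ∈ U, hammingAdj 1 z x → hammingAdj 1 z y → z ∈ (L.erase x).erase y := by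
    intro z hz hzx hzy
    simp [L, hz, (hammingAdj_one_iff.mp hzx).1, (hammingAdj_one_iff.mp hzy).1,
      apply_eq_of_hammingAdj_of_hammingAdj hxy hi hzx hzy]
  have hcard : #((L.erase x).erase y) ≤ 1 := by
    rw [card_erase_of_mem (by simp [L, hy, hi, hxy.symm]), card_erase_of_mem (by simp [L, hx])]
    omega
  exact card_le_one.mp hcard u (hmem u hu hux huy) v (hmem v hv hvx hvy)

theorem card_lt_three_of_shatters {U W : Finset (Fin 2 → ZMod q)}
    (hU : ∀ i t, #(U.filter (· i = t)) ≤ 3) (hWU : W ⊆ U) (hS : Shatters 1 U W) : #W < 3 := by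
  by_contra! hW
  obtain ⟨u, hu, huW⟩ := hS W subset_rfl
  have hadj : ∀ w ∈ W, hammingAdj 1 u w := fun w hw => (huW w hw).1 hw
  obtain ⟨x, hx, y, hy, hxy, i, hi⟩ := exists_ne_apply_eq_of_forall_hammingAdj hW hadj
  obtain ⟨z, hz, hzxy⟩ : ∃ z ∈ W, z ∉ ({x, y} : Finset _) :=
    exists_mem_notMem_of_card_lt_card (card_le_two.trans_lt hW)
  obtain ⟨v, hv, hvW⟩ := hS {x, y} (by simp [insert_subset_iff, hx, hy])
  have huv : u = v :=
    eq_of_hammingAdj_of_card_filter_le_three hU (hWU hx) (hWU hy) hxy hi hu hv (hadj x hx)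
      (hadj y hy) ((hvW x hx).1 (by simp)) ((hvW y hy).1 (by simp))
  exact hzxy ((hvW z hz).2 (huv ▸ hadj z hz))

variable [NeZero q]

def diagonalBand (D : Finset (ZMod q)) : Finset (Fin 2 → ZMod q) :=
  univ.filter fun z => z 1 - z 0 ∈ D

lemma card_diagonalBand (D : Finset (ZMod q)) : #(diagonalBand D) = q * #D := by
  calc #(diagonalBand D) = #(univ ×ˢ D) := by
        refine card_nbij' (fun z => (z 0, z 1 - z 0)) (fun p => ![p.1, p.1 + p.2]) ?_ ?_ ?_ ?_
        · intro z hz; simpa [diagonalBand] using hz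
        · intro p hp; simpa [diagonalBand] using hp
        · intro z _; ext i; fin_cases i <;> simp
        · intro p _; simp
    _ = q * #D := by rw [card_product, card_univ, ZMod.card]

lemma card_filter_diagonalBand_le (D : Finset (ZMod q)) (i : Fin 2) (t : ZMod q) :
    #((diagonalBand D).filter (· i = t)) ≤ #D := by
  refine card_le_card_of_injOn (fun z => z 1 - z 0) (fun z hz => ?_) fun z hz z' hz' h => ?_
  · simp only [coe_filter, diagonalBand, mem_filter] at hz
    exact hz.1.2
  · simp only [coe_filter, diagonalBand, mem_filter, Set.mem_ofPred_eq] at hz hz'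
    ext j
    fin_cases i <;> fin_cases j <;> grind

end HammingPlane

lemma card_image_natCast_range {q n : ℕ} (hn : n ≤ q) :
    #((range n).image (Nat.cast : ℕ → ZMod q)) = n := by
  rw [card_image_of_injOn, card_range]
  intro a ha b hb h
  simp only [coe_range, Set.mem_Iio] at ha hb
  rwa [ZMod.natCast_eq_natCast_iff', Nat.mod_eq_of_lt (by omega), Nat.mod_eq_of_lt (by omega)] at h

/-- for every `q ≥ 3` there is `U ⊆ V(H(2,q))` with `|U| = 3q`
whose VC-dimension is strictly less than 3. -/
theorem exists_vc_dim_lt_three_H2q (q : ℕ) (hq : 3 ≤ q) :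
    ∃ U : Finset (Fin 2 → ZMod q),
      U.card = 3 * q ∧
      (∀ W ⊆ U, Shatters 1 U W → W.card < 3) := by
  have : NeZero q := ⟨by omega⟩
  have hD := card_image_natCast_range (q := q) hq
  refine ⟨diagonalBand ((range 3).image Nat.cast), ?_, fun W hWU hS =>
    card_lt_three_of_shatters (fun i t => ?_) hWU hS⟩
  · rw [card_diagonalBand, hD, mul_comm]
  · exact (card_filter_diagonalBand_le _ i t).trans hD.le
end

section
/- Let q ≥ 3 be a natural number, and let U be a subset of the vertices of the Hamming graph H(2,q,2) with |U| ≥ 2q. Then the VC-dimension of (U, n(U)) is at least 2. -/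
/-
Read a point `u` as the edge from row `u 0` to column `u 1` of a bipartite graph on the rows and
columns, so that two points are adjacent in `H(2,q,2)` exactly when their edges are disjoint. If `U`
has no shattered pair, a point alone in its row or column can be deleted, losing a line; and when
every point shares its row and its column with other points, a short local argument shows that `U`
contains a `2 × 2` square, and then is that square. As for forests, it follows by induction that `U`
has fewer points than the at most `2q` lines it meets, or at most `4 < 2q` points.
-/

section

open Finset

variable {q : ℕ}

lemma hammingAdj_iff_forall_ne {d : ℕ} {x y : Fin d → ZMod q} :
    hammingAdj d x y ↔ ∀ i, x i ≠ y i := by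
  have h := card_eq_iff_eq_univ (univ.filter fun i => x i ≠ y i)
  rw [Fintype.card_fin, filter_eq_self] at h
  rw [hammingAdj]
  simpa using h

lemma hammingAdj_two_iff {i j : Fin 2} (hij : i ≠ j) {x y : Fin 2 → ZMod q} :
    hammingAdj 2 x y ↔ x i ≠ y i ∧ x j ≠ y j := by
  rw [hammingAdj_iff_forall_ne]
  refine ⟨fun h => ⟨h i, h j⟩, fun h k => ?_⟩
  obtain rfl | rfl : k = i ∨ k = j := by omega
  exacts [h.1, h.2]

lemma eq_of_apply_eq_of_apply_eq {i j : Fin 2} (hij : i ≠ j) {x y : Fin 2 → ZMod q}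
    (hi : x i = y i) (hj : x j = y j) : x = y := by
  funext k
  obtain rfl | rfl : k = i ∨ k = j := by omega
  exacts [hi, hj]

def HasShatteredPair {d : ℕ} (t : ℕ) (U : Finset (Fin d → ZMod q)) : Prop :=
  ∃ W ⊆ U, W.card = 2 ∧ Shatters t U W

lemma HasShatteredPair.mono {d t : ℕ} {U U' : Finset (Fin d → ZMod q)} (hUU' : U ⊆ U')
    (h : HasShatteredPair t U) : HasShatteredPair t U' := by
  obtain ⟨W, hWU, hW, hshat⟩ := h
  refine ⟨W, hWU.trans hUU', hW, fun S hS => ?_⟩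
  obtain ⟨u, hu, hadj⟩ := hshat S hS
  exact ⟨u, hUU' hu, hadj⟩

lemma hasShatteredPair_of_witnesses {d t : ℕ} {U : Finset (Fin d → ZMod q)}
    {w₁ w₂ : Fin d → ZMod q} (hw₁ : w₁ ∈ U) (hw₂ : w₂ ∈ U) (hne : w₁ ≠ w₂)
    (hnone : ∃ u ∈ U, ¬ hammingAdj t u w₁ ∧ ¬ hammingAdj t u w₂)
    (hfst : ∃ u ∈ U, hammingAdj t u w₁ ∧ ¬ hammingAdj t u w₂)
    (hsnd : ∃ u ∈ U, ¬ hammingAdj t u w₁ ∧ hammingAdj t u w₂)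
    (hboth : ∃ u ∈ U, hammingAdj t u w₁ ∧ hammingAdj t u w₂) :
    HasShatteredPair t U := by
  refine ⟨{w₁, w₂}, insert_subset_iff.2 ⟨hw₁, singleton_subset_iff.2 hw₂⟩, card_pair hne,
    fun S _ => ?_⟩
  suffices ∃ u ∈ U, (w₁ ∈ S ↔ hammingAdj t u w₁) ∧ (w₂ ∈ S ↔ hammingAdj t u w₂) by
    obtain ⟨u, hu, h₁, h₂⟩ := this
    refine ⟨u, hu, fun w hw => ?_⟩
    rcases mem_insert.1 hw with rfl | hw
    · exact h₁
    · rwa [mem_singleton.1 hw]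
  by_cases hS₁ : w₁ ∈ S <;> by_cases hS₂ : w₂ ∈ S
  · obtain ⟨u, hu, h₁, h₂⟩ := hboth
    exact ⟨u, hu, iff_of_true hS₁ h₁, iff_of_true hS₂ h₂⟩
  · obtain ⟨u, hu, h₁, h₂⟩ := hfst
    exact ⟨u, hu, iff_of_true hS₁ h₁, iff_of_false hS₂ h₂⟩
  · obtain ⟨u, hu, h₁, h₂⟩ := hsnd
    exact ⟨u, hu, iff_of_false hS₁ h₁, iff_of_true hS₂ h₂⟩
  · obtain ⟨u, hu, h₁, h₂⟩ := hnone
    exact ⟨u, hu, iff_of_false hS₁ h₁, iff_of_false hS₂ h₂⟩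

lemma hasShatteredPair_of_collinear {i j : Fin 2} (hij : i ≠ j) {U : Finset (Fin 2 → ZMod q)}
    {w₁ w₂ f₁ f₂ f : Fin 2 → ZMod q}
    (hw₁ : w₁ ∈ U) (hw₂ : w₂ ∈ U) (hf₁ : f₁ ∈ U) (hf₂ : f₂ ∈ U) (hf : f ∈ U)
    (hwi : w₁ i = w₂ i) (hwj : w₁ j ≠ w₂ j)
    (hf₁i : f₁ i ≠ w₁ i) (hf₁j : f₁ j = w₂ j) (hf₂i : f₂ i ≠ w₁ i) (hf₂j : f₂ j = w₁ j)
    (hfi : f i ≠ w₁ i) (hfj₁ : f j ≠ w₁ j) (hfj₂ : f j ≠ w₂ j) :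
    HasShatteredPair 2 U := by
  refine hasShatteredPair_of_witnesses hw₁ hw₂ (fun h => hwj (congrFun h j))
    ⟨w₁, hw₁, ?_⟩ ⟨f₁, hf₁, ?_⟩ ⟨f₂, hf₂, ?_⟩ ⟨f, hf, ?_⟩ <;>
  simp only [hammingAdj_two_iff hij] <;> grind

lemma hasShatteredPair_of_corner {U : Finset (Fin 2 → ZMod q)} {c w₁ w₂ f : Fin 2 → ZMod q}
    (hc : c ∈ U) (hw₁ : w₁ ∈ U) (hw₂ : w₂ ∈ U) (hf : f ∈ U)
    (hw₁0 : w₁ 0 = c 0) (hw₁1 : w₁ 1 ≠ c 1) (hw₂0 : w₂ 0 ≠ c 0) (hw₂1 : w₂ 1 = c 1)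
    (hf0 : f 0 ≠ c 0) (hf0' : f 0 ≠ w₂ 0) (hf1 : f 1 ≠ c 1) (hf1' : f 1 ≠ w₁ 1) :
    HasShatteredPair 2 U := by
  refine hasShatteredPair_of_witnesses hw₁ hw₂ (fun h => hw₂0 (h ▸ hw₁0))
    ⟨c, hc, ?_⟩ ⟨w₂, hw₂, ?_⟩ ⟨w₁, hw₁, ?_⟩ ⟨f, hf, ?_⟩ <;>
  simp only [hammingAdj_two_iff zero_ne_one] <;> grind

def HasSquare (U : Finset (Fin 2 → ZMod q)) : Prop :=
  ∃ t : Fin 2 → Finset (ZMod q), (∀ i, (t i).card = 2) ∧ Fintype.piFinset t ⊆ U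

lemma HasSquare.mono {U U' : Finset (Fin 2 → ZMod q)} (hUU' : U ⊆ U') (h : HasSquare U) :
    HasSquare U' :=
  let ⟨t, ht, htU⟩ := h
  ⟨t, ht, htU.trans hUU'⟩

lemma exists_mem_piFinset_apply_eq {i j : Fin 2} (hij : i ≠ j) {t : Fin 2 → Finset (ZMod q)}
    {a b : ZMod q} (ha : a ∈ t i) (hb : b ∈ t j) :
    ∃ u ∈ Fintype.piFinset t, u i = a ∧ u j = b := by
  refine ⟨fun k => if k = i then a else b, Fintype.mem_piFinset.2 fun k => ?_, by simp,
    by simp [hij.symm]⟩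
  obtain rfl | rfl : k = i ∨ k = j := by omega
  · simpa using ha
  · simpa [hij.symm] using hb

lemma hasShatteredPair_of_square_of_apply_mem_of_apply_notMem {i j : Fin 2} (hij : i ≠ j)
    {U : Finset (Fin 2 → ZMod q)} {t : Fin 2 → Finset (ZMod q)} (ht : ∀ k, (t k).card = 2)
    (htU : Fintype.piFinset t ⊆ U) {p : Fin 2 → ZMod q} (hp : p ∈ U)
    (hpi : p i ∈ t i) (hpj : p j ∉ t j) : HasShatteredPair 2 U := by
  obtain ⟨x, hx, hxp⟩ := exists_mem_ne (by rw [ht i]; norm_num) (p i)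
  obtain ⟨y, y', hyy', hty⟩ := card_eq_two.1 (ht j)
  have hy : y ∈ t j := by simp [hty]
  have hy' : y' ∈ t j := by simp [hty]
  rw [hty, mem_insert, mem_singleton, not_or] at hpj
  obtain ⟨w₁, hw₁, hw₁i, hw₁j⟩ := exists_mem_piFinset_apply_eq hij hx hy
  obtain ⟨w₂, hw₂, hw₂i, hw₂j⟩ := exists_mem_piFinset_apply_eq hij hx hy'
  obtain ⟨f₁, hf₁, hf₁i, hf₁j⟩ := exists_mem_piFinset_apply_eq hij hpi hy'
  obtain ⟨f₂, hf₂, hf₂i, hf₂j⟩ := exists_mem_piFinset_apply_eq hij hpi hy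
  refine hasShatteredPair_of_collinear hij (htU hw₁) (htU hw₂) (htU hf₁) (htU hf₂) hp
    ?_ ?_ ?_ ?_ ?_ ?_ ?_ ?_ ?_ <;> grind

lemma hasShatteredPair_of_square_of_notMem {U : Finset (Fin 2 → ZMod q)}
    {t : Fin 2 → Finset (ZMod q)} (ht : ∀ k, (t k).card = 2) (htU : Fintype.piFinset t ⊆ U)
    {p : Fin 2 → ZMod q} (hp : p ∈ U) (hpt : p ∉ Fintype.piFinset t) : HasShatteredPair 2 U := by
  rw [Fintype.mem_piFinset, Fin.forall_fin_two, not_and_or] at hpt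
  by_cases hp0 : p 0 ∈ t 0 <;> by_cases hp1 : p 1 ∈ t 1
  · tauto
  · exact hasShatteredPair_of_square_of_apply_mem_of_apply_notMem zero_ne_one ht htU hp hp0 hp1
  · exact hasShatteredPair_of_square_of_apply_mem_of_apply_notMem one_ne_zero ht htU hp hp1 hp0
  obtain ⟨x, x', hxx', htx⟩ := card_eq_two.1 (ht 0)
  obtain ⟨y, y', hyy', hty⟩ := card_eq_two.1 (ht 1)
  rw [htx, mem_insert, mem_singleton, not_or] at hp0
  rw [hty, mem_insert, mem_singleton, not_or] at hp1
  have hx : x ∈ t 0 := by simp [htx]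
  have hx' : x' ∈ t 0 := by simp [htx]
  have hy : y ∈ t 1 := by simp [hty]
  have hy' : y' ∈ t 1 := by simp [hty]
  obtain ⟨c, hc, hc0, hc1⟩ := exists_mem_piFinset_apply_eq zero_ne_one hx hy
  obtain ⟨w₁, hw₁, hw₁0, hw₁1⟩ := exists_mem_piFinset_apply_eq zero_ne_one hx hy'
  obtain ⟨w₂, hw₂, hw₂0, hw₂1⟩ := exists_mem_piFinset_apply_eq zero_ne_one hx' hy
  refine hasShatteredPair_of_corner (htU hc) (htU hw₁) (htU hw₂) hp
    ?_ ?_ ?_ ?_ ?_ ?_ ?_ ?_ <;> grind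

lemma card_le_four_of_hasSquare {U : Finset (Fin 2 → ZMod q)} (hU : ¬ HasShatteredPair 2 U)
    (hsq : HasSquare U) : U.card ≤ 4 := by
  obtain ⟨t, ht, htU⟩ := hsq
  have hUt : U ⊆ Fintype.piFinset t := fun p hp =>
    by_contra fun hpt => hU (hasShatteredPair_of_square_of_notMem ht htU hp hpt)
  calc U.card ≤ (Fintype.piFinset t).card := card_le_card hUt
    _ = 4 := by simp [Fintype.card_piFinset, ht]

lemma hasSquare_of_forall_exists_ne {U : Finset (Fin 2 → ZMod q)} (hU : ¬ HasShatteredPair 2 U)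
    (hmate : ∀ p ∈ U, ∀ i, ∃ u ∈ U, u i = p i ∧ u ≠ p) {p : Fin 2 → ZMod q} (hp : p ∈ U) :
    HasSquare U := by
  obtain ⟨r, hr, hr0, hrp⟩ := hmate p hp 0
  obtain ⟨c, hc, hc1, hcp⟩ := hmate p hp 1
  obtain ⟨r', hr', hr'1, hr'r⟩ := hmate r hr 1
  obtain ⟨c', hc', hc'0, hc'c⟩ := hmate c hc 0
  have hr1 : r 1 ≠ p 1 := fun h => hrp (eq_of_apply_eq_of_apply_eq zero_ne_one hr0 h)
  have hc0 : c 0 ≠ p 0 := fun h => hcp (eq_of_apply_eq_of_apply_eq zero_ne_one h hc1)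
  have hr'0 : r' 0 ≠ r 0 := fun h => hr'r (eq_of_apply_eq_of_apply_eq zero_ne_one h hr'1)
  have hc'1 : c' 1 ≠ c 1 := fun h => hc'c (eq_of_apply_eq_of_apply_eq zero_ne_one hc'0 h)
  have hc'r : c' 1 = r 1 := by
    by_contra hne
    apply hU
    refine hasShatteredPair_of_collinear zero_ne_one hp hr hr' hc hc'
      ?_ ?_ ?_ ?_ ?_ ?_ ?_ ?_ ?_ <;> grind
  refine ⟨![{p 0, c 0}, {p 1, r 1}], Fin.forall_fin_two.2 ⟨card_pair hc0.symm,
    card_pair hr1.symm⟩, fun u hu => ?_⟩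
  simp only [Fintype.mem_piFinset, Fin.forall_fin_two, Matrix.cons_val_zero, Matrix.cons_val_one,
    mem_insert, mem_singleton] at hu
  obtain ⟨h0 | h0, h1 | h1⟩ := hu
  · rwa [eq_of_apply_eq_of_apply_eq zero_ne_one h0 h1]
  · rwa [eq_of_apply_eq_of_apply_eq zero_ne_one (h0.trans hr0.symm) h1]
  · rwa [eq_of_apply_eq_of_apply_eq zero_ne_one h0 (h1.trans hc1.symm)]
  · rwa [eq_of_apply_eq_of_apply_eq zero_ne_one (h0.trans hc'0.symm) (h1.trans hc'r.symm)]

def numLines {d : ℕ} (U : Finset (Fin d → ZMod q)) : ℕ :=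
  ∑ i, (U.image (· i)).card

lemma numLines_le {d : ℕ} [NeZero q] (U : Finset (Fin d → ZMod q)) : numLines U ≤ d * q := by
  simpa [numLines, ZMod.card] using sum_le_sum fun i (_ : i ∈ univ) => card_le_univ (U.image (· i))

lemma numLines_singleton {d : ℕ} (p : Fin d → ZMod q) : numLines {p} = d := by
  simp [numLines]

lemma numLines_erase_lt {d : ℕ} {U : Finset (Fin d → ZMod q)} {p : Fin d → ZMod q} (hp : p ∈ U)
    {i : Fin d} (hpi : ∀ u ∈ U, u i = p i → u = p) : numLines (U.erase p) < numLines U := by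
  have hsub (k : Fin d) : (U.erase p).image (· k) ⊆ U.image (· k) :=
    image_subset_image (erase_subset p U)
  refine sum_lt_sum (fun k _ => card_le_card (hsub k)) ⟨i, mem_univ i, card_lt_card ?_⟩
  refine (ssubset_iff_of_subset (hsub i)).2 ⟨p i, mem_image_of_mem _ hp, ?_⟩
  simp only [mem_image, mem_erase]
  rintro ⟨u, ⟨hup, hu⟩, hui⟩
  exact hup (hpi u hu hui)

theorem eq_empty_or_card_lt_numLines_or_hasSquare (U : Finset (Fin 2 → ZMod q))
    (hU : ¬ HasShatteredPair 2 U) : U = ∅ ∨ U.card < numLines U ∨ HasSquare U := by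
  induction U using Finset.strongInduction with
  | H U ih =>
  by_cases hleaf : ∃ p ∈ U, ∃ i, ∀ u ∈ U, u i = p i → u = p
  · obtain ⟨p, hp, i, hpi⟩ := hleaf
    rcases ih (U.erase p) (erase_ssubset hp) (fun h => hU (h.mono (erase_subset p U)))
      with hempty | hlt | hsq
    · rw [erase_eq_empty_iff] at hempty
      rcases hempty with rfl | rfl
      · exact Or.inl rfl
      · simp [numLines_singleton]
    · have := numLines_erase_lt hp hpi
      have := card_erase_add_one hp
      omega
    · exact Or.inr (Or.inr (hsq.mono (erase_subset p U)))
  · push Not at hleaf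
    obtain rfl | ⟨p, hp⟩ := U.eq_empty_or_nonempty
    · exact Or.inl rfl
    · exact Or.inr (Or.inr (hasSquare_of_forall_exists_ne hU hleaf hp))

end

/-- if `q ≥ 3` and `U ⊆ V(H(2,q,2))` has `|U| ≥ 2q`,
then the VC-dimension of `(U, n(U))` is at least 2. -/
theorem vc_dim_ge_two_H2q2 (q : ℕ) (hq : 3 ≤ q)
    (U : Finset (Fin 2 → ZMod q)) (hU : 2 * q ≤ U.card) :
    ∃ W ⊆ U, W.card = 2 ∧ Shatters 2 U W := by
  have : NeZero q := ⟨by omega⟩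
  by_contra h
  have hlines := numLines_le U
  rcases eq_empty_or_card_lt_numLines_or_hasSquare U h with rfl | hlt | hsq
  · rw [Finset.card_empty] at hU
    omega
  · omega
  · have := card_le_four_of_hasSquare h hsq
    omega
end

section
/- Let q ≥ 3 be a natural number and let U be a subset of the vertices of the Hamming graph H(2,q). If U contains three distinct vertices lying on a common rectilinear line L, as well as a fourth vertex not on L, then the VC-dimension of (U, n(U)) is at least 2. -/
/-
Three distinct vertices `a, b, c` on a line `L` of `H(2,q)` differ pairwise in the coordinate
along `L`, so a vertex `w` off `L` agrees there with at most one of them; relabel so that it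
agrees with neither `a` nor `b`. Then `{a, b}` is shattered: `c` is adjacent to both, `b` only
to `a`, `a` only to `b`, and `w`, differing from each of them in both coordinates, to neither.
-/

section HammingAdj

variable {d q : ℕ} {u v : Fin d → ZMod q}

lemma not_hammingAdj_self {t : ℕ} (ht : t ≠ 0) (u : Fin d → ZMod q) : ¬ hammingAdj t u u := by
  simp [hammingAdj, ht.symm]

lemma hammingAdj_one_of_forall_ne_eq {j : Fin d} (hj : u j ≠ v j) (h : ∀ k ≠ j, u k = v k) :
    hammingAdj 1 u v := by
  rw [hammingAdj, Finset.card_eq_one]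
  refine ⟨j, Finset.ext fun k => ?_⟩
  by_cases hk : k = j
  · simp [hk, hj]
  · simp [hk, h k hk]

lemma not_hammingAdj_one_of_apply_ne {i j : Fin d} (hij : i ≠ j) (hi : u i ≠ v i)
    (hj : u j ≠ v j) : ¬ hammingAdj 1 u v :=
  (Finset.one_lt_card.2 ⟨i, by simp [hi], j, by simp [hj], hij⟩).ne'

end HammingAdj

lemma shatters_pair {d q t : ℕ} {U : Finset (Fin d → ZMod q)} {a b : Fin d → ZMod q}
    (h₀ : ∃ u ∈ U, ¬ hammingAdj t u a ∧ ¬ hammingAdj t u b)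
    (h₁ : ∃ u ∈ U, hammingAdj t u a ∧ ¬ hammingAdj t u b)
    (h₂ : ∃ u ∈ U, ¬ hammingAdj t u a ∧ hammingAdj t u b)
    (h₁₂ : ∃ u ∈ U, hammingAdj t u a ∧ hammingAdj t u b) :
    Shatters t U {a, b} := by
  intro S _
  obtain ⟨u, hu, hua, hub⟩ :
      ∃ u ∈ U, (a ∈ S ↔ hammingAdj t u a) ∧ (b ∈ S ↔ hammingAdj t u b) := by
    by_cases ha : a ∈ S <;> by_cases hb : b ∈ S <;> simpa [ha, hb]
  refine ⟨u, hu, ?_⟩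
  simp only [Finset.mem_insert, Finset.mem_singleton]
  rintro w (rfl | rfl) <;> assumption

section Line

variable {q : ℕ} {i j : Fin 2} {u v : Fin 2 → ZMod q}

lemma Fin.two_eq_or_eq_of_ne (hij : i ≠ j) (k : Fin 2) : k = i ∨ k = j := by
  omega

lemma apply_ne_of_apply_eq (hij : i ≠ j) (huv : u ≠ v) (hi : u i = v i) : u j ≠ v j :=
  fun hj => huv <| funext fun k => by
    rcases Fin.two_eq_or_eq_of_ne hij k with rfl | rfl <;> assumption

lemma hammingAdj_one_of_apply_eq (hij : i ≠ j) (hi : u i = v i) (hj : u j ≠ v j) :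
    hammingAdj 1 u v :=
  hammingAdj_one_of_forall_ne_eq hj fun k hk =>
    (Fin.two_eq_or_eq_of_ne hij k).resolve_right hk ▸ hi

lemma shatters_pair_on_line (hij : i ≠ j) {U : Finset (Fin 2 → ZMod q)}
    {a b c w : Fin 2 → ZMod q} (ha : a ∈ U) (hb : b ∈ U) (hc : c ∈ U) (hw : w ∈ U)
    (hab : a ≠ b) (hac : a ≠ c) (hbc : b ≠ c) (hline₁ : a i = b i) (hline₂ : a i = c i)
    (hoff : w i ≠ a i) (hwa : w j ≠ a j) (hwb : w j ≠ b j) :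
    Shatters 1 U {a, b} := by
  have hline₃ : b i = c i := hline₁ ▸ hline₂
  refine shatters_pair ⟨w, hw, ?_, ?_⟩ ⟨b, hb, ?_, not_hammingAdj_self one_ne_zero b⟩
    ⟨a, ha, not_hammingAdj_self one_ne_zero a, ?_⟩ ⟨c, hc, ?_, ?_⟩
  · exact not_hammingAdj_one_of_apply_ne hij hoff hwa
  · exact not_hammingAdj_one_of_apply_ne hij (hline₁ ▸ hoff) hwb
  · exact hammingAdj_one_of_apply_eq hij hline₁.symm (apply_ne_of_apply_eq hij hab hline₁).symm
  · exact hammingAdj_one_of_apply_eq hij hline₁ (apply_ne_of_apply_eq hij hab hline₁)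
  · exact hammingAdj_one_of_apply_eq hij hline₂.symm (apply_ne_of_apply_eq hij hac hline₂).symm
  · exact hammingAdj_one_of_apply_eq hij hline₃.symm (apply_ne_of_apply_eq hij hbc hline₃).symm

end Line

theorem vc_dim_ge_two_of_three_on_line_general (q : ℕ)
    (U : Finset (Fin 2 → ZMod q)) (i : Fin 2)
    (x y z w : Fin 2 → ZMod q)
    (hx : x ∈ U) (hy : y ∈ U) (hz : z ∈ U) (hw : w ∈ U)
    (hxy : x ≠ y) (hxz : x ≠ z) (hyz : y ≠ z)
    (hline₁ : x i = y i) (hline₂ : x i = z i)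
    (hoff : w i ≠ x i) :
    ∃ W ⊆ U, W.card = 2 ∧ Shatters 1 U W := by
  suffices ∃ a ∈ U, ∃ b ∈ U, a ≠ b ∧ Shatters 1 U {a, b} by
    obtain ⟨a, ha, b, hb, hab, hshat⟩ := this
    exact ⟨{a, b}, Finset.insert_subset ha (Finset.singleton_subset_iff.2 hb),
      Finset.card_pair hab, hshat⟩
  obtain ⟨j, hji⟩ := exists_ne i
  have hij : i ≠ j := hji.symm
  have hxyj := apply_ne_of_apply_eq hij hxy hline₁
  have hxzj := apply_ne_of_apply_eq hij hxz hline₂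
  have hyzj := apply_ne_of_apply_eq hij hyz (hline₁ ▸ hline₂)
  by_cases hwx : w j = x j
  · exact ⟨y, hy, z, hz, hyz, shatters_pair_on_line hij hy hz hx hw hyz hxy.symm hxz.symm
      (hline₁ ▸ hline₂) hline₁.symm (hline₁ ▸ hoff) (hwx ▸ hxyj) (hwx ▸ hxzj)⟩
  by_cases hwy : w j = y j
  · exact ⟨x, hx, z, hz, hxz, shatters_pair_on_line hij hx hz hy hw hxz hxy hyz.symm
      hline₂ hline₁ hoff (hwy ▸ hxyj.symm) (hwy ▸ hyzj)⟩
  exact ⟨x, hx, y, hy, hxy, shatters_pair_on_line hij hx hy hz hw hxy hxz hyz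
    hline₁ hline₂ hoff hwx hwy⟩

/-- if `q ≥ 3` and `U ⊆ V(H(2,q))` contains three distinct vertices on a
common rectilinear line (agreeing in coordinate `i`) together with a fourth vertex off
that line, then the VC-dimension of `(U, n(U))` is at least 2. -/
theorem vc_dim_ge_two_of_three_on_line (q : ℕ) (hq : 3 ≤ q)
    (U : Finset (Fin 2 → ZMod q)) (i : Fin 2)
    (x y z w : Fin 2 → ZMod q)
    (hx : x ∈ U) (hy : y ∈ U) (hz : z ∈ U) (hw : w ∈ U)
    (hxy : x ≠ y) (hxz : x ≠ z) (hyz : y ≠ z)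
    (hline₁ : x i = y i) (hline₂ : x i = z i)
    (hoff : w i ≠ x i) :
    ∃ W ⊆ U, W.card = 2 ∧ Shatters 1 U W :=
  vc_dim_ge_two_of_three_on_line_general q U i x y z w hx hy hz hw hxy hxz hyz hline₁ hline₂ hoff
end

section
/- Let d ≥ 2 and q ≥ 2 be natural numbers and let U be a subset of the vertices of the Hamming graph H(d,q). If the VC-dimension of (U, n(U)) is at least 3, then either some rectilinear line contains at least four vertices of U, or U contains a rectangle. -/
open Function

section

open Finset

variable {ι β : Type*} [DecidableEq ι]

def HasRectangle (U : Finset (ι → β)) : Prop :=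
  ∃ (i j : ι), i ≠ j ∧ ∃ (a b c e : β), a ≠ b ∧ c ≠ e ∧
    ∃ base : ι → β,
      (fun k => if k = i then a else if k = j then c else base k) ∈ U ∧
      (fun k => if k = i then a else if k = j then e else base k) ∈ U ∧
      (fun k => if k = i then b else if k = j then c else base k) ∈ U ∧
      (fun k => if k = i then b else if k = j then e else base k) ∈ U

theorem hasRectangle_of_mem {U : Finset (ι → β)} {u : ι → β} {i j : ι} {a c : β}
    (hij : i ≠ j) (ha : a ≠ u i) (hc : c ≠ u j) (hu : u ∈ U) (hui : update u i a ∈ U)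
    (huj : update u j c ∈ U) (huij : update (update u i a) j c ∈ U) : HasRectangle U := by
  refine ⟨i, j, hij, u i, a, u j, c, ha.symm, hc.symm, u, ?_, ?_, ?_, ?_⟩ <;>
  [convert hu using 1; convert huj using 1; convert hui using 1; convert huij using 1] <;>
  funext k <;> by_cases hki : k = i <;> by_cases hkj : k = j <;> simp_all

theorem card_lt_card_filter_eq_off {U W : Finset (ι → β)} {u : ι → β} {i : ι}
    [DecidablePred fun v : ι → β => ∀ k ≠ i, v k = u k]
    (hu : u ∈ U) (hWU : W ⊆ U) (hline : ∀ w ∈ W, ∃ a, a ≠ u i ∧ w = update u i a) :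
    #W < #(U.filter fun v : ι → β => ∀ k ≠ i, v k = u k) := by
  have hsub : W ⊆ U.filter fun v : ι → β => ∀ k ≠ i, v k = u k := by
    intro w hw
    obtain ⟨a, -, rfl⟩ := hline w hw
    exact mem_filter.2 ⟨hWU hw, fun k hk => update_of_ne hk _ _⟩
  have huW : u ∉ W := fun h => by
    obtain ⟨a, ha, hua⟩ := hline u h
    exact ha (by simpa using (congrFun hua i).symm)
  exact card_lt_card <| (ssubset_iff_of_subset hsub).2 ⟨u, mem_filter.2 ⟨hu, fun _ _ => rfl⟩, huW⟩

variable [Fintype ι] [DecidableEq β]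

theorem hammingDist_eq_one_iff {x y : ι → β} :
    hammingDist x y = 1 ↔ ∃ i a, a ≠ x i ∧ y = update x i a := by
  simp only [hammingDist, card_eq_one, eq_singleton_iff_unique_mem, mem_filter, mem_univ,
    true_and, eq_update_iff]
  constructor
  · rintro ⟨i, hi, hother⟩
    exact ⟨i, y i, Ne.symm hi, rfl, fun k hk => by_contra fun h => hk (hother k (Ne.symm h))⟩
  · rintro ⟨i, a, ha, rfl, hother⟩
    exact ⟨i, Ne.symm ha, fun k hk => by_contra fun h => hk (hother k h ▸ rfl)⟩

theorem eq_or_eq_update_update_of_hammingDist_eq_one {x v : ι → β} {i j : ι} {a b : β}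
    (hij : i ≠ j) (ha : a ≠ x i) (hb : b ≠ x j)
    (hvi : hammingDist v (update x i a) = 1) (hvj : hammingDist v (update x j b) = 1) :
    v = x ∨ v = update (update x i a) j b := by
  obtain ⟨k, c, -, hk⟩ := hammingDist_eq_one_iff.1 (hammingDist_comm v _ ▸ hvi)
  obtain ⟨l, e, -, hl⟩ := hammingDist_eq_one_iff.1 (hammingDist_comm v _ ▸ hvj)
  have hvk : ∀ m ≠ k, v m = update x i a m := fun m hm => by rw [hk, update_of_ne hm]
  have hvl : ∀ m ≠ l, v m = update x j b m := fun m hm => by rw [hl, update_of_ne hm]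
  -- `update x i a` and `update x j b` differ exactly at `i` and `j`, so `{i, j} = {k, l}`.
  have hi : i = k ∨ i = l := by
    by_contra! h
    exact ha (by simpa [hij] using (hvk i h.1).symm.trans (hvl i h.2))
  have hj : j = k ∨ j = l := by
    by_contra! h
    exact hb (by simpa [hij.symm] using (hvl j h.2).symm.trans (hvk j h.1))
  rcases hi with rfl | rfl <;> rcases hj with rfl | rfl
  · exact absurd rfl hij
  · left
    ext m
    rcases eq_or_ne m i with rfl | hm
    · simpa [hij] using hvl m hij
    · simpa [hm] using hvk m hm
  · right
    ext m
    rcases eq_or_ne m j with rfl | hm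
    · simpa [hij.symm] using hvl m hij.symm
    · simpa [hm] using hvk m hm
  · exact absurd rfl hij

end

theorem hammingAdj_iff {d q t : ℕ} {x y : Fin d → ZMod q} :
    hammingAdj t x y ↔ hammingDist x y = t :=
  Iff.rfl

namespace Shatters

variable {d q : ℕ} {U W : Finset (Fin d → ZMod q)}

theorem exists_forall_hammingAdj (hW : Shatters 1 U W) : ∃ u ∈ U, ∀ w ∈ W, hammingAdj 1 u w :=
  let ⟨u, hu, hadj⟩ := hW W subset_rfl
  ⟨u, hu, fun w hw => (hadj w hw).1 hw⟩

theorem hasRectangle {u : Fin d → ZMod q} {i j : Fin d} {a c : ZMod q}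
    (hSh : Shatters 1 U W) (hWU : W ⊆ U) (hW : 3 ≤ W.card) (hu : u ∈ U)
    (hadj : ∀ w ∈ W, hammingAdj 1 u w) (hij : i ≠ j) (ha : a ≠ u i) (hc : c ≠ u j)
    (hui : update u i a ∈ W) (huj : update u j c ∈ W) : HasRectangle U := by
  obtain ⟨w, hw, hw_pair⟩ : ∃ w ∈ W, w ∉ ({update u i a, update u j c} : Finset _) :=
    Finset.exists_mem_notMem_of_card_lt_card (Finset.card_le_two.trans_lt hW)
  obtain ⟨v, hv, hv_adj⟩ :=
    hSh {update u i a, update u j c} (by simp [Finset.insert_subset_iff, hui, huj])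
  -- `v` sees the two corners `update u i a`, `update u j c` but not `w`, which `u` sees.
  have hvu : v ≠ u := by
    rintro rfl
    exact hw_pair ((hv_adj w hw).2 (hadj w hw))
  have hcorner := eq_or_eq_update_update_of_hammingDist_eq_one hij ha hc
    (hammingAdj_iff.1 ((hv_adj _ hui).1 (by simp))) (hammingAdj_iff.1 ((hv_adj _ huj).1 (by simp)))
  exact hasRectangle_of_mem hij ha hc hu (hWU hui) (hWU huj) (hcorner.resolve_left hvu ▸ hv)

end Shatters

theorem line_or_rectangle_of_vc_dim_ge_three_general (d q : ℕ)
    (U : Finset (Fin d → ZMod q))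
    (hvc : ∃ W ⊆ U, 3 ≤ W.card ∧ Shatters 1 U W) :
    (∃ (i : Fin d) (base : Fin d → ZMod q),
      4 ≤ (U.filter fun v => ∀ k, k ≠ i → v k = base k).card) ∨
    (∃ (i j : Fin d), i ≠ j ∧ ∃ (a b c e : ZMod q), a ≠ b ∧ c ≠ e ∧
      ∃ base : Fin d → ZMod q,
        (fun k => if k = i then a else if k = j then c else base k) ∈ U ∧
        (fun k => if k = i then a else if k = j then e else base k) ∈ U ∧
        (fun k => if k = i then b else if k = j then c else base k) ∈ U ∧
        (fun k => if k = i then b else if k = j then e else base k) ∈ U) := by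
  obtain ⟨W, hWU, hW, hSh⟩ := hvc
  obtain ⟨u, hu, hadj⟩ := hSh.exists_forall_hammingAdj
  obtain ⟨w₀, hw₀⟩ := Finset.card_pos.1 (by omega : 0 < W.card)
  obtain ⟨i₀, a₀, ha₀, rfl⟩ := hammingDist_eq_one_iff.1 (hammingAdj_iff.1 (hadj w₀ hw₀))
  by_cases hline : ∀ w ∈ W, ∃ a, a ≠ u i₀ ∧ w = update u i₀ a
  · exact Or.inl ⟨i₀, u, hW.trans_lt (card_lt_card_filter_eq_off hu hWU hline)⟩
  · push Not at hline
    obtain ⟨w, hw, hw_off⟩ := hline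
    obtain ⟨i, a, ha, rfl⟩ := hammingDist_eq_one_iff.1 (hammingAdj_iff.1 (hadj w hw))
    have hi : i₀ ≠ i := by
      rintro rfl
      exact hw_off a ha rfl
    exact Or.inr (hSh.hasRectangle hWU hW hu hadj hi ha₀ ha hw₀ hw)

/-- if `d ≥ 2`, `q ≥ 2` and the VC-dimension of `(U, n(U))` is at least 3
for `U ⊆ V(H(d,q))`, then either some rectilinear line contains at least four vertices of
`U`, or `U` contains a rectangle. -/
theorem line_or_rectangle_of_vc_dim_ge_three (d q : ℕ) (hd : 2 ≤ d) (hq : 2 ≤ q)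
    (U : Finset (Fin d → ZMod q))
    (hvc : ∃ W ⊆ U, 3 ≤ W.card ∧ Shatters 1 U W) :
    (∃ (i : Fin d) (base : Fin d → ZMod q),
      4 ≤ (U.filter fun v => ∀ k, k ≠ i → v k = base k).card) ∨
    (∃ (i j : Fin d), i ≠ j ∧ ∃ (a b c e : ZMod q), a ≠ b ∧ c ≠ e ∧
      ∃ base : Fin d → ZMod q,
        (fun k => if k = i then a else if k = j then c else base k) ∈ U ∧
        (fun k => if k = i then a else if k = j then e else base k) ∈ U ∧
        (fun k => if k = i then b else if k = j then c else base k) ∈ U ∧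
        (fun k => if k = i then b else if k = j then e else base k) ∈ U) :=
  line_or_rectangle_of_vc_dim_ge_three_general d q U hvc
end
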